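/- arXiv:2002.11384 — 5 statements merged into one kernel-verified Lean document; each statement's English description precedes it below -/
import Mathlib

section
/- Let (X, d) be a metric space, let φ : ℝ → ℝ → X → X (written φ(t; t₀, x₀)) be a time-varying flow on X with equilibrium point x⋆, and let D be an open ball of radius r > 0 centered at x⋆. Suppose V : ℝ × X → ℝ is continuous, W₁(d(x, x⋆)) ≤ V(t, x) ≤ W₂(d(x, x⋆)) for all t ≥ 0 and x ∈ D, where W₁, W₂ are class 𝒦 functions, and suppose that for every t₀ ≥ 0 and x₀ ∈ D, the function t ↦ V(t, φ(t; t₀, x₀)) is nonincreasing on any interval [t₀, T] on which the trajectory remains in D. Then x⋆ is uniformly stable: there exist a class 𝒦 function α and a constant c > 0, independent of t₀, such that d(φ(t; t₀, x₀), x⋆) ≤ α(d(x₀, x⋆)) for all t ≥ t₀ ≥ 0 and all x₀ with d(x₀, x⋆) < c. -/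
/-!
Along a trajectory that stays in the ball,
`W₁(d(φ(t), x⋆)) ≤ V(t, φ(t)) ≤ V(t₀, x₀) ≤ W₂(d(x₀, x⋆))`.
If `W₂(d(x₀, x⋆)) < W₁(r/2)`, this makes the sphere of radius `r/2` a barrier the continuous
trajectory can never reach, so the estimate holds for all `t ≥ t₀`, and inverting `W₁` on
`[0, r/2]` gives `d(φ(t), x⋆) ≤ W₁⁻¹(W₂(d(x₀, x⋆)))`, uniformly in `t₀`.
-/

/-- A class 𝒦 function: continuous, strictly increasing on `[0, ∞)`,
vanishing at `0`, and nonnegative on `[0, ∞)`. -/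
def IsClassK (α : ℝ → ℝ) : Prop :=
  ContinuousOn α (Set.Ici 0) ∧ StrictMonoOn α (Set.Ici 0) ∧ α 0 = 0 ∧
    ∀ r, 0 ≤ r → 0 ≤ α r

/-- A class 𝒦𝓛 function: continuous on `[0,∞) × [0,∞)`, class 𝒦 in the first
argument for each fixed second argument, and decreasing to `0` in the second
argument for each fixed first argument. -/
def IsClassKL (β : ℝ → ℝ → ℝ) : Prop :=
  ContinuousOn (Function.uncurry β) (Set.Ici 0 ×ˢ Set.Ici 0) ∧
  (∀ s, 0 ≤ s → IsClassK fun r => β r s) ∧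
  (∀ r, 0 ≤ r → AntitoneOn (fun s => β r s) (Set.Ici 0) ∧
    Filter.Tendsto (fun s => β r s) Filter.atTop (nhds 0))

/-- A time-varying flow `φ t t₀ x₀ = φ(t; t₀, x₀)` on a metric space:
initial condition, semigroup property, and continuity in time. -/
def IsFlow {X : Type*} [MetricSpace X] (φ : ℝ → ℝ → X → X) : Prop :=
  (∀ t₀ x₀, φ t₀ t₀ x₀ = x₀) ∧
  (∀ t s t₀ x₀, t₀ ≤ s → s ≤ t → φ t s (φ s t₀ x₀) = φ t t₀ x₀) ∧
  (∀ t₀ x₀, Continuous fun t => φ t t₀ x₀)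

/-- `xs` is an equilibrium point of the flow `φ`: `φ(t; t₀, x⋆) = x⋆` for all
`t ≥ t₀ ≥ 0`. -/
def IsEquilibrium {X : Type*} [MetricSpace X] (φ : ℝ → ℝ → X → X) (xs : X) : Prop :=
  ∀ t₀ t, 0 ≤ t₀ → t₀ ≤ t → φ t t₀ xs = xs

open Set Metric

theorem isClassK_id : IsClassK id :=
  ⟨continuousOn_id, strictMono_id.strictMonoOn _, rfl, fun _ h => h⟩

namespace IsClassK

variable {W : ℝ → ℝ}

theorem pos (hW : IsClassK W) {s : ℝ} (hs : 0 < s) : 0 < W s := by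
  simpa [hW.2.2.1] using hW.2.1 (mem_Ici.2 le_rfl) (mem_Ici.2 hs.le) hs

theorem le_iff_le (hW : IsClassK W) {a b : ℝ} (ha : 0 ≤ a) (hb : 0 ≤ b) :
    W a ≤ W b ↔ a ≤ b :=
  hW.2.1.le_iff_le ha hb

theorem exists_pos_forall_lt (hW : IsClassK W) {b : ℝ} (hb : 0 < b) :
    ∃ c > 0, ∀ s, 0 ≤ s → s < c → W s < b := by
  obtain ⟨c, hc, hcW⟩ := Metric.continuousWithinAt_iff.1 (hW.1 0 self_mem_Ici) b hb
  refine ⟨c, hc, fun s hs hsc => ?_⟩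
  have hWs := @hcW s hs (by rwa [Real.dist_0_eq_abs, abs_of_nonneg hs])
  rw [hW.2.2.1, Real.dist_0_eq_abs] at hWs
  exact (le_abs_self _).trans_lt hWs

theorem add (hW : IsClassK W) {g : ℝ → ℝ} (hgc : ContinuousOn g (Ici 0))
    (hgm : MonotoneOn g (Ici 0)) (hg0 : g 0 = 0) : IsClassK (W + g) := by
  obtain ⟨hWc, hWm, hW0, hWnn⟩ := hW
  refine ⟨hWc.add hgc, fun a ha b hb hab => add_lt_add_of_lt_of_le (hWm ha hb hab)
    (hgm ha hb hab.le), by simp [hW0, hg0], fun s hs =>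
    add_nonneg (hWnn s hs) (hg0 ▸ hgm self_mem_Ici hs hs)⟩

theorem exists_rightInverseOn (hW : IsClassK W) {ρ : ℝ} (hρ : 0 ≤ ρ) :
    ∃ g : ℝ → ℝ, Continuous g ∧ Monotone g ∧ g 0 = 0 ∧ (∀ y, g y ∈ Icc 0 ρ) ∧
      ∀ y ∈ Icc 0 (W ρ), W (g y) = y := by
  obtain ⟨hWc, hWm, hW0, hWnn⟩ := hW
  have hWρ : 0 ≤ W ρ := hWnn ρ hρ
  have hsub : Icc 0 ρ ⊆ Ici (0 : ℝ) := Icc_subset_Ici_self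
  let F : Icc 0 ρ → Icc 0 (W ρ) := fun x =>
    ⟨W x, hWnn x x.2.1, hWm.monotoneOn (hsub x.2) (mem_Ici.2 hρ) x.2.2⟩
  have hF : StrictMono F := fun a b hab => hWm (hsub a.2) (hsub b.2) hab
  have hFsurj : Function.Surjective F := by
    rintro ⟨y, hy⟩
    obtain ⟨x, hx, hWx⟩ := intermediate_value_Icc hρ (hWc.mono hsub) (by rwa [hW0])
    exact ⟨⟨x, hx⟩, Subtype.ext hWx⟩
  let e := hF.orderIsoOfSurjective F hFsurj
  refine ⟨fun y => e.symm (projIcc 0 (W ρ) hWρ y), ?_, ?_, ?_, fun y => (e.symm _).2, ?_⟩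
  · exact continuous_subtype_val.comp (e.symm.continuous.comp continuous_projIcc)
  · exact Subtype.mono_coe _ |>.comp (e.symm.monotone.comp (monotone_projIcc hWρ))
  · show ((e.symm (projIcc 0 (W ρ) hWρ 0) : Icc 0 ρ) : ℝ) = 0
    rw [projIcc_left, (e.symm_apply_eq (x := ⟨0, left_mem_Icc.2 hρ⟩)).2 (Subtype.ext hW0.symm)]
  · intro y hy
    show W (e.symm (projIcc 0 (W ρ) hWρ y) : ℝ) = y
    rw [projIcc_of_mem hWρ hy]
    exact congrArg Subtype.val (e.apply_symm_apply _)

/-- The composite `W₁⁻¹ ∘ W₂`, made strictly increasing by adding the identity. -/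
theorem exists_isClassK_le_comp {W₁ W₂ : ℝ → ℝ} (hW₁ : IsClassK W₁) (hW₂ : IsClassK W₂)
    {ρ : ℝ} (hρ : 0 ≤ ρ) :
    ∃ α, IsClassK α ∧ ∀ s, 0 ≤ s → W₂ s ≤ W₁ ρ → W₂ s ≤ W₁ (α s) := by
  obtain ⟨g, hgc, hgm, hg0, hgmem, hWg⟩ := hW₁.exists_rightInverseOn hρ
  refine ⟨id + g ∘ W₂, isClassK_id.add (hgc.comp_continuousOn hW₂.1)
    (hgm.comp_monotoneOn hW₂.2.1.monotoneOn) (by simp [hW₂.2.2.1, hg0]), fun s hs hsρ => ?_⟩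
  have hgs : 0 ≤ g (W₂ s) := (hgmem _).1
  calc W₂ s = W₁ (g (W₂ s)) := (hWg _ ⟨hW₂.2.2.2 s hs, hsρ⟩).symm
    _ ≤ W₁ (s + g (W₂ s)) := (hW₁.le_iff_le hgs (add_nonneg hs hgs)).2 (le_add_of_nonneg_left hs)

end IsClassK

theorem forall_lt_of_continuous_of_barrier {f : ℝ → ℝ} {a ρ : ℝ} (hf : Continuous f)
    (ha : f a < ρ) (hbarrier : ∀ T, a ≤ T → (∀ τ ∈ Icc a T, f τ ≤ ρ) → f T < ρ) :
    ∀ t, a ≤ t → f t < ρ := by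
  intro t hat
  by_contra! ht
  -- `sInf Z` is the first time in `[a, t]` at which `f` reaches the level `ρ`.
  let Z := Icc a t ∩ f ⁻¹' {ρ}
  have hZbdd : BddBelow Z := ⟨a, fun _ hx => hx.1.1⟩
  have hZ : Z.Nonempty := by
    obtain ⟨τ, hτ, hfτ⟩ := intermediate_value_Icc hat hf.continuousOn ⟨ha.le, ht⟩
    exact ⟨τ, hτ, hfτ⟩
  have hTZ : sInf Z ∈ Z :=
    (isClosed_Icc.inter (isClosed_singleton.preimage hf)).csInf_mem hZ hZbdd
  have hbelow : ∀ τ ∈ Icc a (sInf Z), f τ ≤ ρ := by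
    intro τ hτ
    by_contra! hρτ
    obtain ⟨σ, hσ, hfσ⟩ := intermediate_value_Icc hτ.1 hf.continuousOn ⟨ha.le, hρτ.le⟩
    have hTσ : sInf Z ≤ σ := csInf_le hZbdd ⟨⟨hσ.1, hσ.2.trans (hτ.2.trans hTZ.1.2)⟩, hfσ⟩
    have hστ : σ = τ := le_antisymm hσ.2 (hτ.2.trans hTσ)
    exact hρτ.ne' (hστ ▸ hfσ)
  exact (hbarrier _ hTZ.1.1 hbelow).ne hTZ.2

section Lyapunov

variable {X : Type*} [MetricSpace X] {φ : ℝ → ℝ → X → X} {xs : X} {r : ℝ} {V : ℝ → X → ℝ}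
  {W₁ W₂ : ℝ → ℝ} {t₀ : ℝ} {x₀ : X}

theorem lyapunov_bound_of_forall_mem_ball (hinit : φ t₀ t₀ x₀ = x₀)
    (hbound : ∀ t, 0 ≤ t → ∀ x ∈ ball xs r, W₁ (dist x xs) ≤ V t x ∧ V t x ≤ W₂ (dist x xs))
    (hdecr : ∀ t₀, 0 ≤ t₀ → ∀ x₀ ∈ ball xs r, ∀ T, t₀ ≤ T →
      (∀ τ ∈ Icc t₀ T, φ τ t₀ x₀ ∈ ball xs r) → AntitoneOn (fun t => V t (φ t t₀ x₀)) (Icc t₀ T))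
    (ht₀ : 0 ≤ t₀) (hx₀ : x₀ ∈ ball xs r) {T : ℝ} (hT : t₀ ≤ T)
    (hstay : ∀ τ ∈ Icc t₀ T, φ τ t₀ x₀ ∈ ball xs r) :
    W₁ (dist (φ T t₀ x₀) xs) ≤ W₂ (dist x₀ xs) :=
  calc W₁ (dist (φ T t₀ x₀) xs) ≤ V T (φ T t₀ x₀) :=
        (hbound T (ht₀.trans hT) _ (hstay T (right_mem_Icc.2 hT))).1
    _ ≤ V t₀ (φ t₀ t₀ x₀) :=
        hdecr t₀ ht₀ x₀ hx₀ T hT hstay (left_mem_Icc.2 hT) (right_mem_Icc.2 hT) hT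
    _ = V t₀ x₀ := by rw [hinit]
    _ ≤ W₂ (dist x₀ xs) := (hbound t₀ ht₀ x₀ hx₀).2

theorem dist_flow_lt_of_lyapunov (hcont : Continuous fun t => φ t t₀ x₀)
    (hinit : φ t₀ t₀ x₀ = x₀) (hW₁ : StrictMonoOn W₁ (Ici 0))
    (hbound : ∀ t, 0 ≤ t → ∀ x ∈ ball xs r, W₁ (dist x xs) ≤ V t x ∧ V t x ≤ W₂ (dist x xs))
    (hdecr : ∀ t₀, 0 ≤ t₀ → ∀ x₀ ∈ ball xs r, ∀ T, t₀ ≤ T →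
      (∀ τ ∈ Icc t₀ T, φ τ t₀ x₀ ∈ ball xs r) → AntitoneOn (fun t => V t (φ t t₀ x₀)) (Icc t₀ T))
    (ht₀ : 0 ≤ t₀) {ρ : ℝ} (hρr : ρ < r) (hx₀ : dist x₀ xs < ρ)
    (hsmall : W₂ (dist x₀ xs) < W₁ ρ) :
    ∀ t, t₀ ≤ t → dist (φ t t₀ x₀) xs < ρ := by
  refine forall_lt_of_continuous_of_barrier (hcont.dist continuous_const) (by rwa [hinit])
    fun T hT hle => ?_
  have hstay : ∀ τ ∈ Icc t₀ T, φ τ t₀ x₀ ∈ ball xs r := fun τ hτ => (hle τ hτ).trans_lt hρr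
  refine (hW₁.lt_iff_lt dist_nonneg (dist_nonneg.trans hx₀.le)).1 ?_
  exact (lyapunov_bound_of_forall_mem_ball hinit hbound hdecr ht₀ (hx₀.trans hρr) hT
    hstay).trans_lt hsmall

end Lyapunov

theorem uniform_stability_of_lyapunov_general
    {X : Type*} [MetricSpace X]
    (φ : ℝ → ℝ → X → X) (xs : X)
    (hflow : IsFlow φ)
    (r : ℝ) (hr : 0 < r)
    (V : ℝ → X → ℝ)
    (W₁ W₂ : ℝ → ℝ) (hW₁ : IsClassK W₁) (hW₂ : IsClassK W₂)
    (hbound : ∀ t, 0 ≤ t → ∀ x ∈ Metric.ball xs r,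
      W₁ (dist x xs) ≤ V t x ∧ V t x ≤ W₂ (dist x xs))
    (hdecr : ∀ t₀, 0 ≤ t₀ → ∀ x₀ ∈ Metric.ball xs r, ∀ T, t₀ ≤ T →
      (∀ τ ∈ Set.Icc t₀ T, φ τ t₀ x₀ ∈ Metric.ball xs r) →
      AntitoneOn (fun t => V t (φ t t₀ x₀)) (Set.Icc t₀ T)) :
    ∃ (α : ℝ → ℝ) (c : ℝ), IsClassK α ∧ 0 < c ∧
      ∀ t₀ t x₀, 0 ≤ t₀ → t₀ ≤ t → dist x₀ xs < c →
        dist (φ t t₀ x₀) xs ≤ α (dist x₀ xs) := by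
  obtain ⟨hinit, -, hcont⟩ := hflow
  have hρ : 0 < r / 2 := half_pos hr
  obtain ⟨α, hα, hαW⟩ := hW₁.exists_isClassK_le_comp hW₂ hρ.le
  obtain ⟨δ, hδ, hδW⟩ := hW₂.exists_pos_forall_lt (hW₁.pos hρ)
  refine ⟨α, min δ (r / 2), hα, lt_min hδ hρ, fun t₀ t x₀ ht₀ ht hx₀ => ?_⟩
  have hx₀ρ : dist x₀ xs < r / 2 := hx₀.trans_le (min_le_right _ _)
  have hsmall : W₂ (dist x₀ xs) < W₁ (r / 2) :=
    hδW _ dist_nonneg (hx₀.trans_le (min_le_left _ _))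
  have htrap := dist_flow_lt_of_lyapunov (hcont t₀ x₀) (hinit t₀ x₀) hW₁.2.1 hbound hdecr ht₀
    (half_lt_self hr) hx₀ρ hsmall
  have hbd := lyapunov_bound_of_forall_mem_ball (hinit t₀ x₀) hbound hdecr ht₀
    (hx₀ρ.trans (half_lt_self hr)) ht fun τ hτ => (htrap τ hτ.1).trans (half_lt_self hr)
  exact (hW₁.le_iff_le dist_nonneg (hα.2.2.2 _ dist_nonneg)).1
    (hbd.trans (hαW _ dist_nonneg hsmall.le))

/-- Direct Lyapunov theorem for uniform stability on a metric space.
If a continuous Lyapunov candidate `V` is sandwiched between class 𝒦 functions of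
the distance to the equilibrium on an open ball `D` of radius `r` about `x⋆`, and
`t ↦ V(t, φ(t; t₀, x₀))` is nonincreasing on every interval on which the trajectory
stays in `D`, then `x⋆` is uniformly stable. -/
theorem uniform_stability_of_lyapunov
    {X : Type*} [MetricSpace X]
    (φ : ℝ → ℝ → X → X) (xs : X)
    (hflow : IsFlow φ) (heq : IsEquilibrium φ xs)
    (r : ℝ) (hr : 0 < r)
    (V : ℝ → X → ℝ)
    (hVcont : Continuous fun p : ℝ × X => V p.1 p.2)
    (W₁ W₂ : ℝ → ℝ) (hW₁ : IsClassK W₁) (hW₂ : IsClassK W₂)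
    (hbound : ∀ t, 0 ≤ t → ∀ x ∈ Metric.ball xs r,
      W₁ (dist x xs) ≤ V t x ∧ V t x ≤ W₂ (dist x xs))
    (hdecr : ∀ t₀, 0 ≤ t₀ → ∀ x₀ ∈ Metric.ball xs r, ∀ T, t₀ ≤ T →
      (∀ τ ∈ Set.Icc t₀ T, φ τ t₀ x₀ ∈ Metric.ball xs r) →
      AntitoneOn (fun t => V t (φ t t₀ x₀)) (Set.Icc t₀ T)) :
    ∃ (α : ℝ → ℝ) (c : ℝ), IsClassK α ∧ 0 < c ∧
      ∀ t₀ t x₀, 0 ≤ t₀ → t₀ ≤ t → dist x₀ xs < c →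
        dist (φ t t₀ x₀) xs ≤ α (dist x₀ xs) :=
  uniform_stability_of_lyapunov_general φ xs hflow r hr V W₁ W₂ hW₁ hW₂ hbound hdecr
end

section
/- Let (X, d) be a metric space, let φ be a time-varying flow on X with equilibrium point x⋆, and let D be an open ball of radius r > 0 centered at x⋆. Suppose V : ℝ × X → ℝ is continuous, W₁(d(x, x⋆)) ≤ V(t, x) ≤ W₂(d(x, x⋆)) for all t ≥ 0 and x ∈ D with W₁, W₂, W₃ class 𝒦 functions, and suppose that for every t₀ ≥ 0 and x₀ ∈ D, the function v(t) = V(t, φ(t; t₀, x₀)) is differentiable with v′(t) ≤ −W₃(d(φ(t; t₀, x₀), x⋆)) on any interval on which the trajectory remains in D. Then x⋆ is uniformly asymptotically stable: there exist a class 𝒦𝓛 function β and a constant c > 0, independent of t₀, such that d(φ(t; t₀, x₀), x⋆) ≤ β(d(x₀, x⋆), t − t₀) for all t ≥ t₀ ≥ 0 and all x₀ with d(x₀, x⋆) < c. -/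
/-!
Along a trajectory that stays in `D`, `V` is nonincreasing, so `W₁ (d (φ t)) ≤ W₂ (d (φ τ))` for
`τ ≤ t`. On the sphere of radius `r / 2` one has `V ≥ W₁ (r / 2)`, a level that a trajectory
starting close enough to `x⋆` never reaches: it stays in `D` forever (uniform stability). While
`d (φ t) ≥ δ`, `V` decreases at rate at least `W₃ δ`, so every such trajectory enters the
`δ`-ball within a time depending only on `δ` (uniform attraction).

The two uniform estimates combine into one 𝒦𝓛 bound: the supremum `M u` of all distances reached
from initial distance at most `u`, and the supremum `G s` of those reached after elapsed time at
least `s`, are monotone; averaging them over the windows `[u, 2u]` and `[s - 1, s]` makes them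
continuous, and adding `u` and `exp (-s)` gives a class 𝒦 function `α ≥ M` and a positive
decreasing `γ ≥ G`. Finally `β u s = √(α u * γ s) ≥ min (α u) (γ s)`.
-/

open Set Filter Topology Metric

theorem antitoneOn_Icc_of_hasDerivAt_nonpos {f : ℝ → ℝ} {a b : ℝ}
    (h : ∀ t ∈ Icc a b, ∃ f', HasDerivAt f f' t ∧ f' ≤ 0) : AntitoneOn f (Icc a b) := by
  choose! f' hf' hf'₀ using h
  exact antitoneOn_of_hasDerivWithinAt_nonpos (convex_Icc a b)
    (fun t ht => (hf' t ht).continuousAt.continuousWithinAt)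
    (fun t ht => (hf' t (interior_subset ht)).hasDerivWithinAt)
    (fun t ht => hf'₀ t (interior_subset ht))

theorem ContinuousOn.exists_eq_forall_le_of_le_of_le {g : ℝ → ℝ} {a b ρ : ℝ}
    (hg : ContinuousOn g (Icc a b)) (hab : a ≤ b) (ha : g a ≤ ρ) (hb : ρ ≤ g b) :
    ∃ T ∈ Icc a b, g T = ρ ∧ ∀ τ ∈ Icc a T, g τ ≤ ρ := by
  have hK : IsCompact (Icc a b ∩ g ⁻¹' Ici ρ) :=
    isCompact_Icc.of_isClosed_subset
      (hg.preimage_isClosed_of_isClosed isClosed_Icc isClosed_Ici) inter_subset_left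
  obtain ⟨T, ⟨hT, hTρ⟩, hTleast⟩ := hK.exists_isLeast ⟨b, ⟨hab, le_rfl⟩, hb⟩
  have hleast : ∀ τ ∈ Icc a T, ρ ≤ g τ → T ≤ τ := fun τ hτ hρ =>
    hTleast ⟨⟨hτ.1, hτ.2.trans hT.2⟩, hρ⟩
  obtain ⟨σ, hσ, hgσ⟩ := intermediate_value_Icc hT.1 (hg.mono (Icc_subset_Icc_right hT.2))
    ⟨ha, hTρ⟩
  have hσT : σ = T := le_antisymm hσ.2 (hleast σ hσ hgσ.ge)
  refine ⟨T, hT, hσT ▸ hgσ, fun τ hτ => le_of_not_gt fun hρ => ?_⟩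
  rw [le_antisymm hτ.2 (hleast τ hτ hρ.le), ← hσT, hgσ] at hρ
  exact lt_irrefl ρ hρ

theorem MonotoneOn.integral_zero_one_mem_Icc {f : ℝ → ℝ} (hf : MonotoneOn f (Icc 0 1)) :
    ∫ t in (0 : ℝ)..1, f t ∈ Icc (f 0) (f 1) := by
  have hint : IntervalIntegrable f MeasureTheory.volume 0 1 :=
    MonotoneOn.intervalIntegrable (by rwa [uIcc_of_le zero_le_one])
  have h0 : (0 : ℝ) ∈ Icc 0 1 := ⟨le_rfl, zero_le_one⟩
  have h1 : (1 : ℝ) ∈ Icc 0 1 := ⟨zero_le_one, le_rfl⟩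
  constructor
  · simpa using intervalIntegral.integral_mono_on zero_le_one intervalIntegrable_const hint
      fun t ht => hf h0 ht ht.1
  · simpa using intervalIntegral.integral_mono_on zero_le_one hint intervalIntegrable_const
      fun t ht => hf ht h1 ht.2

namespace IsClassK

variable {α : ℝ → ℝ}

theorem nonneg (hα : IsClassK α) {x : ℝ} (hx : 0 ≤ x) : 0 ≤ α x := hα.2.2.2 x hx

theorem lt_iff_lt (hα : IsClassK α) {x y : ℝ} (hx : 0 ≤ x) (hy : 0 ≤ y) : α x < α y ↔ x < y :=
  hα.2.1.lt_iff_lt hx hy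

theorem monotoneOn (hα : IsClassK α) : MonotoneOn α (Ici 0) := hα.2.1.monotoneOn

theorem pos_s1 (hα : IsClassK α) {x : ℝ} (hx : 0 < x) : 0 < α x := by
  simpa [hα.2.2.1] using (hα.lt_iff_lt le_rfl hx.le).2 hx

theorem exists_pos_lt (hα : IsClassK α) {ε : ℝ} (hε : 0 < ε) : ∃ δ > 0, α δ < ε := by
  have h : Tendsto α (𝓝[>] 0) (𝓝 0) := by
    simpa [hα.2.2.1] using
      (hα.1 0 self_mem_Ici).tendsto.mono_left (nhdsWithin_mono _ Ioi_subset_Ici_self)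
  obtain ⟨δ, hδε, hδ⟩ := ((h.eventually (gt_mem_nhds hε)).and self_mem_nhdsWithin).exists
  exact ⟨δ, hδ, hδε⟩

end IsClassK

theorem isClassKL_sqrt_mul {α γ : ℝ → ℝ} (hα : IsClassK α) (hγ : Continuous γ)
    (hγ_anti : Antitone γ) (hγ_pos : ∀ s, 0 < γ s) (hγ_lim : Tendsto γ atTop (𝓝 0)) :
    IsClassKL fun u s => √(α u * γ s) := by
  refine ⟨?_, fun s _ => ⟨?_, ?_, ?_, fun u _ => Real.sqrt_nonneg _⟩, fun u hu => ⟨?_, ?_⟩⟩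
  · exact Real.continuous_sqrt.comp_continuousOn
      ((hα.1.comp continuousOn_fst fun p hp => hp.1).mul (hγ.comp continuous_snd).continuousOn)
  · exact Real.continuous_sqrt.comp_continuousOn (hα.1.mul continuousOn_const)
  · intro u hu w hw huw
    exact Real.sqrt_lt_sqrt (mul_nonneg (hα.nonneg hu) (hγ_pos s).le)
      (mul_lt_mul_of_pos_right (hα.2.1 hu hw huw) (hγ_pos s))
  · simp [hα.2.2.1]
  · intro s _ s' _ hss'
    exact Real.sqrt_le_sqrt (mul_le_mul_of_nonneg_left (hγ_anti hss') (hα.nonneg hu))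
  · simpa using (hγ_lim.const_mul (α u)).sqrt

theorem exists_isClassK_ge {M : ℝ → ℝ} (hM : Monotone M) (hM0 : M 0 = 0)
    (hMc : ContinuousWithinAt M (Ici 0) 0) : ∃ α, IsClassK α ∧ ∀ u, 0 ≤ u → M u ≤ α u := by
  set avg : ℝ → ℝ := fun u => ∫ t in (0 : ℝ)..1, M (u + u * t)
  have hint : ∀ u, 0 ≤ u →
      IntervalIntegrable (fun t => M (u + u * t)) MeasureTheory.volume 0 1 :=
    fun u hu => Monotone.intervalIntegrable fun t t' h => hM (by gcongr)
  have hbounds : ∀ u, 0 ≤ u → avg u ∈ Icc (M u) (M (2 * u)) := fun u hu => by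
    simpa [avg, two_mul] using MonotoneOn.integral_zero_one_mem_Icc
      (f := fun t => M (u + u * t)) fun t _ t' _ h => hM (by gcongr)
  have hmono : MonotoneOn avg (Ici 0) := fun u hu w hw huw =>
    intervalIntegral.integral_mono_on zero_le_one (hint u hu) (hint w hw) fun t ht =>
      hM (add_le_add huw (mul_le_mul_of_nonneg_right huw ht.1))
  -- For `u ≠ 0`, `avg u` is the mean of `M` over `[u, 2u]`, a difference quotient of a primitive.
  have hcont_pos : ∀ u, 0 < u → ContinuousAt avg u := by
    intro u hu
    set F : ℝ → ℝ := fun x => ∫ y in (0 : ℝ)..x, M y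
    have hF : Continuous F :=
      intervalIntegral.continuous_primitive (fun _ _ => hM.intervalIntegrable) 0
    have heq : (fun w => w⁻¹ * (F (w + w * 1) - F (w + w * 0))) =ᶠ[𝓝 u] avg := by
      filter_upwards [Ioi_mem_nhds hu] with w hw
      rw [intervalIntegral.integral_interval_sub_left hM.intervalIntegrable hM.intervalIntegrable,
        ← smul_eq_mul, ← intervalIntegral.integral_comp_add_mul _ hw.ne']
    exact ((continuousAt_inv₀ hu.ne').mul (by fun_prop)).congr heq
  have hcont_zero : ContinuousWithinAt avg (Ici 0) 0 := by
    have h2 : Tendsto (fun u => M (2 * u)) (𝓝[≥] 0) (𝓝 0) := by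
      have hmaps : MapsTo (fun u : ℝ => 2 * u) (Ici 0) (Ici 0) := fun u hu =>
        mem_Ici.2 (mul_nonneg zero_le_two (mem_Ici.1 hu))
      simpa [hM0, Function.comp_def] using
        (hMc.comp_of_eq (continuousWithinAt_id.const_mul 2) hmaps (mul_zero 2)).tendsto
    have havg0 : avg 0 = 0 := by simp [avg, hM0]
    rw [ContinuousWithinAt, havg0]
    refine tendsto_of_tendsto_of_tendsto_of_le_of_le' tendsto_const_nhds h2 ?_ ?_
    · filter_upwards [self_mem_nhdsWithin] with u hu
      exact (hM0 ▸ hM hu).trans (hbounds u hu).1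
    · filter_upwards [self_mem_nhdsWithin] with u hu using (hbounds u hu).2
  refine ⟨fun u => u + avg u, ⟨?_, ?_, by simp [avg, hM0], fun u hu => ?_⟩, fun u hu => ?_⟩
  · intro u hu
    refine continuousWithinAt_id.add ?_
    rcases (mem_Ici.1 hu).eq_or_lt with rfl | hu
    · exact hcont_zero
    · exact (hcont_pos u hu).continuousWithinAt
  · exact fun u hu w hw huw => add_lt_add_of_lt_of_le huw (hmono hu hw huw.le)
  · exact add_nonneg hu ((hM0 ▸ hM hu).trans (hbounds u hu).1)
  · linarith [(hbounds u hu).1]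

theorem exists_continuous_antitone_ge {G : ℝ → ℝ} (hG : Antitone G)
    (hG_lim : Tendsto G atTop (𝓝 0)) :
    ∃ γ : ℝ → ℝ, Continuous γ ∧ Antitone γ ∧ (∀ s, 0 < γ s) ∧ Tendsto γ atTop (𝓝 0) ∧
      ∀ s, G s ≤ γ s := by
  have hG_nonneg : ∀ s, 0 ≤ G s := hG.le_of_tendsto hG_lim
  set avg : ℝ → ℝ := fun s => ∫ t in (0 : ℝ)..1, G (s - t)
  have hint : ∀ s, IntervalIntegrable (fun t => G (s - t)) MeasureTheory.volume 0 1 :=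
    fun s => Monotone.intervalIntegrable fun t t' h => hG (sub_le_sub_left h s)
  have hbounds : ∀ s, avg s ∈ Icc (G s) (G (s - 1)) := fun s => by
    simpa [avg] using MonotoneOn.integral_zero_one_mem_Icc
      (f := fun t => G (s - t)) fun t _ t' _ h => hG (sub_le_sub_left h s)
  have hcont : Continuous avg := by
    have heq : avg = fun s => (∫ x in (0 : ℝ)..s - 0, G x) - ∫ x in (0 : ℝ)..s - 1, G x := by
      ext s
      rw [intervalIntegral.integral_interval_sub_left hG.intervalIntegrable hG.intervalIntegrable,
        ← intervalIntegral.integral_comp_sub_left]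
    have hF := intervalIntegral.continuous_primitive (μ := MeasureTheory.volume)
      (fun _ _ => hG.intervalIntegrable) 0
    rw [heq]
    fun_prop
  have hlim : Tendsto avg atTop (𝓝 0) :=
    tendsto_of_tendsto_of_tendsto_of_le_of_le tendsto_const_nhds
      (hG_lim.comp (tendsto_atTop_add_const_right _ (-1) tendsto_id))
      (fun s => (hG_nonneg s).trans (hbounds s).1) (fun s => (hbounds s).2)
  refine ⟨fun s => Real.exp (-s) + avg s, by fun_prop, fun s s' h => ?_, fun s => ?_, ?_,
    fun s => ?_⟩
  · exact add_le_add (Real.exp_le_exp.2 (neg_le_neg h)) <|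
      intervalIntegral.integral_mono_on zero_le_one (hint s') (hint s) fun t _ => hG (by linarith)
  · exact add_pos_of_pos_of_nonneg (Real.exp_pos _) ((hG_nonneg s).trans (hbounds s).1)
  · simpa using Real.tendsto_exp_neg_atTop_nhds_zero.add hlim
  · linarith [Real.exp_pos (-s), (hbounds s).1]

theorem Real.sSup_image_mono {ι : Type*} {d : ι → ℝ} (hd : ∀ i, 0 ≤ d i)
    (hbdd : BddAbove (range d)) {S T : Set ι} (hST : S ⊆ T) : sSup (d '' S) ≤ sSup (d '' T) :=
  Real.sSup_le (forall_mem_image.2 fun _ hi =>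
      le_csSup (hbdd.mono (image_subset_range _ _)) (mem_image_of_mem d (hST hi)))
    (Real.sSup_nonneg (forall_mem_image.2 fun i _ => hd i))

theorem exists_isClassKL_le {ι : Type*} (a s d : ι → ℝ) (ha : ∀ i, 0 ≤ a i) (hd : ∀ i, 0 ≤ d i)
    (hbdd : BddAbove (range d)) (hsmall : ∀ ε > 0, ∃ δ > 0, ∀ i, a i ≤ δ → d i ≤ ε)
    (hlate : ∀ ε > 0, ∃ T, ∀ i, T ≤ s i → d i ≤ ε) :
    ∃ β, IsClassKL β ∧ ∀ i, d i ≤ β (a i) (s i) := by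
  set M : ℝ → ℝ := fun u => sSup (d '' {i | a i ≤ u})
  set G : ℝ → ℝ := fun σ => sSup (d '' {i | σ ≤ s i})
  have hdM : ∀ i, d i ≤ M (a i) := fun i =>
    le_csSup (hbdd.mono (image_subset_range _ _)) (mem_image_of_mem d (le_refl (a i)))
  have hdG : ∀ i, d i ≤ G (s i) := fun i =>
    le_csSup (hbdd.mono (image_subset_range _ _)) (mem_image_of_mem d (le_refl (s i)))
  have hM_mono : Monotone M := fun u w huw =>
    Real.sSup_image_mono hd hbdd fun i hi => le_trans hi huw
  have hG_anti : Antitone G := fun σ τ hστ =>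
    Real.sSup_image_mono hd hbdd fun i hi => le_trans hστ hi
  have hM_small : ∀ ε > 0, ∃ δ > 0, ∀ u ≤ δ, M u ≤ ε := fun ε hε => by
    obtain ⟨δ, hδ, h⟩ := hsmall ε hε
    exact ⟨δ, hδ, fun u hu => Real.sSup_le (forall_mem_image.2 fun i hi => h i (le_trans hi hu))
      hε.le⟩
  have hM_nonneg : ∀ u, 0 ≤ M u := fun u => Real.sSup_nonneg (forall_mem_image.2 fun i _ => hd i)
  have hM0 : M 0 = 0 := le_antisymm (le_of_forall_pos_le_add fun ε hε => by
    obtain ⟨δ, hδ, h⟩ := hM_small ε hε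
    simpa using h 0 hδ.le) (hM_nonneg 0)
  have hMc : ContinuousWithinAt M (Ici 0) 0 := by
    rw [ContinuousWithinAt, hM0]
    refine tendsto_order.2 ⟨fun b hb => Eventually.of_forall fun u => hb.trans_le (hM_nonneg u),
      fun b hb => ?_⟩
    obtain ⟨δ, hδ, h⟩ := hM_small (b / 2) (half_pos hb)
    filter_upwards [Ico_mem_nhdsGE hδ] with u hu using (h u hu.2.le).trans_lt (half_lt_self hb)
  have hG_lim : Tendsto G atTop (𝓝 0) := by
    refine tendsto_order.2 ⟨fun b hb => Eventually.of_forall fun σ =>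
      hb.trans_le (Real.sSup_nonneg (forall_mem_image.2 fun i _ => hd i)), fun b hb => ?_⟩
    obtain ⟨T, h⟩ := hlate (b / 2) (half_pos hb)
    filter_upwards [eventually_ge_atTop T] with σ hσ
    exact (Real.sSup_le (forall_mem_image.2 fun i hi => h i (hσ.trans hi))
      (half_pos hb).le).trans_lt (half_lt_self hb)
  obtain ⟨α, hα, hMα⟩ := exists_isClassK_ge hM_mono hM0 hMc
  obtain ⟨γ, hγ, hγ_anti, hγ_pos, hγ_lim, hGγ⟩ := exists_continuous_antitone_ge hG_anti hG_lim
  refine ⟨_, isClassKL_sqrt_mul hα hγ hγ_anti hγ_pos hγ_lim, fun i => ?_⟩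
  have hmin : 0 ≤ min (α (a i)) (γ (s i)) := le_min (hα.nonneg (ha i)) (hγ_pos _).le
  calc d i ≤ min (α (a i)) (γ (s i)) :=
        le_min ((hdM i).trans (hMα _ (ha i))) ((hdG i).trans (hGγ _))
    _ = √(min (α (a i)) (γ (s i)) * min (α (a i)) (γ (s i))) := (Real.sqrt_mul_self hmin).symm
    _ ≤ √(α (a i) * γ (s i)) := Real.sqrt_le_sqrt <|
        mul_le_mul (min_le_left _ _) (min_le_right _ _) hmin (hα.nonneg (ha i))

structure IsStrictLyapunov {X : Type*} [MetricSpace X] (φ : ℝ → ℝ → X → X) (xs : X) (r : ℝ)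
    (V : ℝ → X → ℝ) (W₁ W₂ W₃ : ℝ → ℝ) : Prop where
  isClassK₁ : IsClassK W₁
  isClassK₂ : IsClassK W₂
  isClassK₃ : IsClassK W₃
  le_of_mem_ball : ∀ t, 0 ≤ t → ∀ x ∈ ball xs r,
    W₁ (dist x xs) ≤ V t x ∧ V t x ≤ W₂ (dist x xs)
  hasDerivAt_le : ∀ t₀, 0 ≤ t₀ → ∀ x₀ ∈ ball xs r, ∀ T, t₀ ≤ T →
    (∀ τ ∈ Icc t₀ T, φ τ t₀ x₀ ∈ ball xs r) →
    ∀ t ∈ Icc t₀ T, ∃ v' : ℝ,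
      HasDerivAt (fun s => V s (φ s t₀ x₀)) v' t ∧ v' ≤ -W₃ (dist (φ t t₀ x₀) xs)

namespace IsStrictLyapunov

variable {X : Type*} [MetricSpace X] {φ : ℝ → ℝ → X → X} {xs : X} {r : ℝ} {V : ℝ → X → ℝ}
  {W₁ W₂ W₃ : ℝ → ℝ} {t₀ T : ℝ} {x₀ : X}

theorem antitoneOn_add_mul (hV : IsStrictLyapunov φ xs r V W₁ W₂ W₃) (hφ : IsFlow φ)
    (ht₀ : 0 ≤ t₀) (hT : t₀ ≤ T) (hstay : ∀ τ ∈ Icc t₀ T, φ τ t₀ x₀ ∈ ball xs r) {k : ℝ}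
    (hk : ∀ τ ∈ Icc t₀ T, k ≤ W₃ (dist (φ τ t₀ x₀) xs)) :
    AntitoneOn (fun s => V s (φ s t₀ x₀) + k * s) (Icc t₀ T) := by
  have hx₀ : x₀ ∈ ball xs r := hφ.1 t₀ x₀ ▸ hstay t₀ ⟨le_rfl, hT⟩
  refine antitoneOn_Icc_of_hasDerivAt_nonpos fun t ht => ?_
  obtain ⟨v', hv', hv'_le⟩ := hV.hasDerivAt_le t₀ ht₀ x₀ hx₀ T hT hstay t ht
  exact ⟨v' + k, hv'.add (by simpa using (hasDerivAt_id t).const_mul k), by linarith [hk t ht]⟩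

theorem antitoneOn (hV : IsStrictLyapunov φ xs r V W₁ W₂ W₃) (hφ : IsFlow φ)
    (ht₀ : 0 ≤ t₀) (hT : t₀ ≤ T) (hstay : ∀ τ ∈ Icc t₀ T, φ τ t₀ x₀ ∈ ball xs r) :
    AntitoneOn (fun s => V s (φ s t₀ x₀)) (Icc t₀ T) := by
  simpa using hV.antitoneOn_add_mul hφ ht₀ hT hstay fun τ _ => hV.isClassK₃.nonneg dist_nonneg

theorem W₁_dist_le_W₂_dist (hV : IsStrictLyapunov φ xs r V W₁ W₂ W₃) (hφ : IsFlow φ)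
    (ht₀ : 0 ≤ t₀) (hstay : ∀ τ ∈ Icc t₀ T, φ τ t₀ x₀ ∈ ball xs r) {τ : ℝ} (hτ : τ ∈ Icc t₀ T) :
    W₁ (dist (φ T t₀ x₀) xs) ≤ W₂ (dist (φ τ t₀ x₀) xs) := by
  have hT : t₀ ≤ T := hτ.1.trans hτ.2
  calc W₁ (dist (φ T t₀ x₀) xs) ≤ V T (φ T t₀ x₀) :=
        (hV.le_of_mem_ball T (ht₀.trans hT) _ (hstay T ⟨hT, le_rfl⟩)).1
    _ ≤ V τ (φ τ t₀ x₀) := hV.antitoneOn hφ ht₀ hT hstay hτ ⟨hT, le_rfl⟩ hτ.2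
    _ ≤ W₂ (dist (φ τ t₀ x₀) xs) := (hV.le_of_mem_ball τ (ht₀.trans hτ.1) _ (hstay τ hτ)).2

theorem dist_lt_of_W₂_lt_W₁ (hV : IsStrictLyapunov φ xs r V W₁ W₂ W₃) (hφ : IsFlow φ)
    (ht₀ : 0 ≤ t₀) (hstay : ∀ τ ∈ Icc t₀ T, φ τ t₀ x₀ ∈ ball xs r) {τ δ ε : ℝ}
    (hτ : τ ∈ Icc t₀ T) (hτδ : dist (φ τ t₀ x₀) xs ≤ δ) (hδε : W₂ δ < W₁ ε) (hε : 0 ≤ ε) :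
    dist (φ T t₀ x₀) xs < ε := by
  refine (hV.isClassK₁.lt_iff_lt dist_nonneg hε).1
    ((hV.W₁_dist_le_W₂_dist hφ ht₀ hstay hτ).trans_lt ?_)
  exact (hV.isClassK₂.monotoneOn dist_nonneg (dist_nonneg.trans hτδ) hτδ).trans_lt hδε

theorem dist_lt_of_W₂_dist_lt (hV : IsStrictLyapunov φ xs r V W₁ W₂ W₃) (hφ : IsFlow φ)
    (ht₀ : 0 ≤ t₀) {ρ : ℝ} (hρr : ρ < r) (hx₀ : dist x₀ xs < ρ)
    (hx₀W : W₂ (dist x₀ xs) < W₁ ρ) (hT : t₀ ≤ T) : dist (φ T t₀ x₀) xs < ρ := by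
  by_contra! hρT
  have hg : Continuous fun τ => dist (φ τ t₀ x₀) xs := (hφ.2.2 t₀ x₀).dist continuous_const
  obtain ⟨T', hT', hT'ρ, hle⟩ := hg.continuousOn.exists_eq_forall_le_of_le_of_le hT
    (by simpa [hφ.1] using hx₀.le) hρT
  have hstay : ∀ τ ∈ Icc t₀ T', φ τ t₀ x₀ ∈ ball xs r := fun τ hτ =>
    mem_ball.2 ((hle τ hτ).trans_lt hρr)
  have h := hV.W₁_dist_le_W₂_dist hφ ht₀ hstay ⟨le_rfl, hT'.1⟩
  rw [hT'ρ, hφ.1] at h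
  exact h.not_gt hx₀W

theorem exists_forall_mem_ball (hV : IsStrictLyapunov φ xs r V W₁ W₂ W₃) (hφ : IsFlow φ)
    (hr : 0 < r) : ∃ c > 0, ∀ t₀ x₀, 0 ≤ t₀ → dist x₀ xs < c → ∀ t, t₀ ≤ t →
      φ t t₀ x₀ ∈ ball xs r := by
  obtain ⟨c, hc, hcW⟩ := hV.isClassK₂.exists_pos_lt (hV.isClassK₁.pos_s1 (half_pos hr))
  refine ⟨min c (r / 2), lt_min hc (half_pos hr), fun t₀ x₀ ht₀ hx₀ t ht => mem_ball.2 ?_⟩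
  have hx₀W : W₂ (dist x₀ xs) < W₁ (r / 2) :=
    ((hV.isClassK₂.lt_iff_lt dist_nonneg hc.le).2 (hx₀.trans_le (min_le_left _ _))).trans hcW
  exact (hV.dist_lt_of_W₂_dist_lt hφ ht₀ (half_lt_self hr) (hx₀.trans_le (min_le_right _ _))
    hx₀W ht).trans (half_lt_self hr)

theorem exists_dist_le (hV : IsStrictLyapunov φ xs r V W₁ W₂ W₃) (hφ : IsFlow φ)
    (ht₀ : 0 ≤ t₀) (hstay : ∀ τ ∈ Icc t₀ (t₀ + T), φ τ t₀ x₀ ∈ ball xs r) {δ : ℝ} (hδ : 0 ≤ δ)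
    (hTδ : W₂ (dist x₀ xs) < W₃ δ * T) : ∃ τ ∈ Icc t₀ (t₀ + T), dist (φ τ t₀ x₀) xs ≤ δ := by
  by_contra! hfar
  have hT : 0 < T :=
    pos_of_mul_pos_right ((hV.isClassK₂.nonneg dist_nonneg).trans_lt hTδ)
      (hV.isClassK₃.nonneg hδ)
  have hIcc : t₀ ≤ t₀ + T := by linarith
  have hx₀ : x₀ ∈ ball xs r := hφ.1 t₀ x₀ ▸ hstay t₀ ⟨le_rfl, hIcc⟩
  have hdecay := hV.antitoneOn_add_mul hφ ht₀ hIcc hstay (k := W₃ δ) fun τ hτ =>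
    hV.isClassK₃.monotoneOn hδ dist_nonneg (hfar τ hτ).le
  have h := hdecay ⟨le_rfl, hIcc⟩ ⟨hIcc, le_rfl⟩ hIcc
  simp only [hφ.1] at h
  have hVt₀ := (hV.le_of_mem_ball t₀ ht₀ x₀ hx₀).2
  have hVT := (hV.le_of_mem_ball (t₀ + T) (by linarith) _ (hstay _ ⟨hIcc, le_rfl⟩)).1
  linarith [hV.isClassK₁.nonneg (dist_nonneg (x := φ (t₀ + T) t₀ x₀) (y := xs)),
    mul_add (W₃ δ) t₀ T]

theorem exists_forall_dist_lt_of_dist_le (hV : IsStrictLyapunov φ xs r V W₁ W₂ W₃)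
    (hφ : IsFlow φ) {c : ℝ}
    (hball : ∀ t₀ x₀, 0 ≤ t₀ → dist x₀ xs < c → ∀ t, t₀ ≤ t → φ t t₀ x₀ ∈ ball xs r)
    {ε : ℝ} (hε : 0 < ε) : ∃ δ > 0, ∀ t₀ t x₀, 0 ≤ t₀ → t₀ ≤ t → dist x₀ xs < c →
      dist x₀ xs ≤ δ → dist (φ t t₀ x₀) xs < ε := by
  obtain ⟨δ, hδ, hδε⟩ := hV.isClassK₂.exists_pos_lt (hV.isClassK₁.pos_s1 hε)
  refine ⟨δ, hδ, fun t₀ t x₀ ht₀ ht hx₀c hx₀ => ?_⟩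
  exact hV.dist_lt_of_W₂_lt_W₁ hφ ht₀ (fun τ hτ => hball t₀ x₀ ht₀ hx₀c τ hτ.1) ⟨le_rfl, ht⟩
    (by rwa [hφ.1]) hδε hε.le

theorem exists_forall_dist_lt_of_le_sub (hV : IsStrictLyapunov φ xs r V W₁ W₂ W₃)
    (hφ : IsFlow φ) {c : ℝ}
    (hball : ∀ t₀ x₀, 0 ≤ t₀ → dist x₀ xs < c → ∀ t, t₀ ≤ t → φ t t₀ x₀ ∈ ball xs r)
    {ε : ℝ} (hε : 0 < ε) : ∃ T, ∀ t₀ t x₀, 0 ≤ t₀ → dist x₀ xs < c →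
      T ≤ t - t₀ → dist (φ t t₀ x₀) xs < ε := by
  obtain ⟨δ, hδ, hδε⟩ := hV.isClassK₂.exists_pos_lt (hV.isClassK₁.pos_s1 hε)
  refine ⟨(W₂ c + 1) / W₃ δ, fun t₀ t x₀ ht₀ hx₀ hT => ?_⟩
  have hstay : ∀ T, ∀ τ ∈ Icc t₀ T, φ τ t₀ x₀ ∈ ball xs r := fun _ τ hτ =>
    hball t₀ x₀ ht₀ hx₀ τ hτ.1
  have hTδ : W₂ (dist x₀ xs) < W₃ δ * ((W₂ c + 1) / W₃ δ) := by
    rw [mul_div_cancel₀ _ (hV.isClassK₃.pos_s1 hδ).ne']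
    linarith [(hV.isClassK₂.lt_iff_lt dist_nonneg (dist_nonneg.trans hx₀.le)).2 hx₀]
  obtain ⟨τ, hτ, hτδ⟩ := hV.exists_dist_le hφ ht₀ (hstay _) hδ.le hTδ
  exact hV.dist_lt_of_W₂_lt_W₁ hφ ht₀ (hstay t) ⟨hτ.1, hτ.2.trans (by linarith)⟩ hτδ hδε
    hε.le

end IsStrictLyapunov

theorem uniform_asymptotic_stability_of_lyapunov_general
    {X : Type*} [MetricSpace X]
    (φ : ℝ → ℝ → X → X) (xs : X)
    (hflow : IsFlow φ)
    (r : ℝ) (hr : 0 < r)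
    (V : ℝ → X → ℝ)
    (W₁ W₂ W₃ : ℝ → ℝ) (hW₁ : IsClassK W₁) (hW₂ : IsClassK W₂) (hW₃ : IsClassK W₃)
    (hbound : ∀ t, 0 ≤ t → ∀ x ∈ Metric.ball xs r,
      W₁ (dist x xs) ≤ V t x ∧ V t x ≤ W₂ (dist x xs))
    (hdecr : ∀ t₀, 0 ≤ t₀ → ∀ x₀ ∈ Metric.ball xs r, ∀ T, t₀ ≤ T →
      (∀ τ ∈ Set.Icc t₀ T, φ τ t₀ x₀ ∈ Metric.ball xs r) →
      ∀ t ∈ Set.Icc t₀ T, ∃ v' : ℝ,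
        HasDerivAt (fun s => V s (φ s t₀ x₀)) v' t ∧
        v' ≤ -W₃ (dist (φ t t₀ x₀) xs)) :
    ∃ (β : ℝ → ℝ → ℝ) (c : ℝ), IsClassKL β ∧ 0 < c ∧
      ∀ t₀ t x₀, 0 ≤ t₀ → t₀ ≤ t → dist x₀ xs < c →
        dist (φ t t₀ x₀) xs ≤ β (dist x₀ xs) (t - t₀) := by
  have hV : IsStrictLyapunov φ xs r V W₁ W₂ W₃ := ⟨hW₁, hW₂, hW₃, hbound, hdecr⟩
  obtain ⟨c, hc, hball⟩ := hV.exists_forall_mem_ball hflow hr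
  let ι := {p : ℝ × ℝ × X // 0 ≤ p.1 ∧ p.1 ≤ p.2.1 ∧ dist p.2.2 xs < c}
  obtain ⟨β, hβ, hle⟩ := exists_isClassKL_le (fun i : ι => dist i.1.2.2 xs)
    (fun i => i.1.2.1 - i.1.1) (fun i => dist (φ i.1.2.1 i.1.1 i.1.2.2) xs)
    (fun _ => dist_nonneg) (fun _ => dist_nonneg)
    ⟨r, forall_mem_range.2 fun i => (mem_ball.1 (hball _ _ i.2.1 i.2.2.2 _ i.2.2.1)).le⟩
    (fun ε hε => by
      obtain ⟨δ, hδ, h⟩ := hV.exists_forall_dist_lt_of_dist_le hflow hball hε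
      exact ⟨δ, hδ, fun i hi => (h _ _ _ i.2.1 i.2.2.1 i.2.2.2 hi).le⟩)
    (fun ε hε => by
      obtain ⟨T, h⟩ := hV.exists_forall_dist_lt_of_le_sub hflow hball hε
      exact ⟨T, fun i hi => (h _ _ _ i.2.1 i.2.2.2 hi).le⟩)
  exact ⟨β, c, hβ, hc, fun t₀ t x₀ ht₀ ht hx₀ => hle ⟨(t₀, t, x₀), ht₀, ht, hx₀⟩⟩

/-- Direct Lyapunov theorem for uniform asymptotic stability on a
metric space. If the Lyapunov candidate is sandwiched between class 𝒦 functions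
of the distance to the equilibrium on a ball `D` about `x⋆`, and along every
trajectory remaining in `D` the function `v(t) = V(t, φ(t; t₀, x₀))` is
differentiable with `v′(t) ≤ −W₃(d(φ(t; t₀, x₀), x⋆))`, then `x⋆` is uniformly
asymptotically stable. -/
theorem uniform_asymptotic_stability_of_lyapunov
    {X : Type*} [MetricSpace X]
    (φ : ℝ → ℝ → X → X) (xs : X)
    (hflow : IsFlow φ) (heq : IsEquilibrium φ xs)
    (r : ℝ) (hr : 0 < r)
    (V : ℝ → X → ℝ)
    (hVcont : Continuous fun p : ℝ × X => V p.1 p.2)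
    (W₁ W₂ W₃ : ℝ → ℝ) (hW₁ : IsClassK W₁) (hW₂ : IsClassK W₂) (hW₃ : IsClassK W₃)
    (hbound : ∀ t, 0 ≤ t → ∀ x ∈ Metric.ball xs r,
      W₁ (dist x xs) ≤ V t x ∧ V t x ≤ W₂ (dist x xs))
    (hdecr : ∀ t₀, 0 ≤ t₀ → ∀ x₀ ∈ Metric.ball xs r, ∀ T, t₀ ≤ T →
      (∀ τ ∈ Set.Icc t₀ T, φ τ t₀ x₀ ∈ Metric.ball xs r) →
      ∀ t ∈ Set.Icc t₀ T, ∃ v' : ℝ,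
        HasDerivAt (fun s => V s (φ s t₀ x₀)) v' t ∧
        v' ≤ -W₃ (dist (φ t t₀ x₀) xs)) :
    ∃ (β : ℝ → ℝ → ℝ) (c : ℝ), IsClassKL β ∧ 0 < c ∧
      ∀ t₀ t x₀, 0 ≤ t₀ → t₀ ≤ t → dist x₀ xs < c →
        dist (φ t t₀ x₀) xs ≤ β (dist x₀ xs) (t - t₀) :=
  uniform_asymptotic_stability_of_lyapunov_general φ xs hflow r hr V W₁ W₂ W₃ hW₁ hW₂ hW₃ hbound
    hdecr
end

section
/- Let (X, d) be a metric space, let φ be a time-varying flow on X with equilibrium point x⋆, and let D be an open ball of radius r > 0 centered at x⋆. Suppose there are constants c₁, c₂, c₃ > 0 and p > 0 and a continuous function V : ℝ × X → ℝ with c₁·d(x, x⋆)^p ≤ V(t, x) ≤ c₂·d(x, x⋆)^p for all t ≥ 0 and x ∈ D, and suppose that for every t₀ ≥ 0 and x₀ ∈ D, the function v(t) = V(t, φ(t; t₀, x₀)) is differentiable with v′(t) ≤ −c₃·d(φ(t; t₀, x₀), x⋆)^p on any interval on which the trajectory remains in D. Then x⋆ is exponentially stable: there exist constants K > 0, λ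 > 0 and c > 0 such that d(φ(t; t₀, x₀), x⋆) ≤ K·e^{−λ(t−t₀)}·d(x₀, x⋆) for all t ≥ t₀ ≥ 0 and all x₀ with d(x₀, x⋆) < c. -/
open Set Real

theorem le_mul_exp_of_hasDerivAt_le_neg_mul {v : ℝ → ℝ} {μ a b : ℝ} (hab : a ≤ b)
    (hv : ∀ t ∈ Icc a b, ∃ v', HasDerivAt v v' t ∧ v' ≤ -μ * v t) :
    v b ≤ v a * exp (-μ * (b - a)) := by
  choose! v' hderiv hle using hv
  have := le_gronwallBound_of_liminf_deriv_right_le (f' := v') (K := -μ) (ε := 0)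
    (fun t ht => (hderiv t ht).continuousAt.continuousWithinAt)
    (fun t ht _ hr => (hderiv t (Ico_subset_Icc_self ht)).hasDerivWithinAt.liminf_right_slope_le hr)
    le_rfl (fun t ht => by simpa using hle t (Ico_subset_Icc_self ht)) b (right_mem_Icc.2 hab)
  rwa [gronwallBound_ε0] at this

theorem le_rpow_inv_mul_of_rpow_le_mul_rpow {x y C p : ℝ} (hx : 0 ≤ x) (hy : 0 ≤ y)
    (hC : 0 ≤ C) (hp : 0 < p) (h : x ^ p ≤ C * y ^ p) : x ≤ C ^ p⁻¹ * y := by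
  rwa [← rpow_rpow_inv hy hp.ne', ← mul_rpow hC (by positivity),
    le_rpow_inv_iff_of_pos hx (by positivity) hp]

theorem le_mul_exp_of_lyapunov {u v : ℝ → ℝ} {a b c₁ c₂ c₃ p : ℝ} (hab : a ≤ b)
    (hc₁ : 0 < c₁) (hc₂ : 0 < c₂) (hc₃ : 0 ≤ c₃) (hp : 0 < p) (hua : 0 ≤ u a) (hub : 0 ≤ u b)
    (hlow : c₁ * u b ^ p ≤ v b) (hup : ∀ t ∈ Icc a b, v t ≤ c₂ * u t ^ p)
    (hderiv : ∀ t ∈ Icc a b, ∃ v', HasDerivAt v v' t ∧ v' ≤ -(c₃ * u t ^ p)) :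
    u b ≤ (c₂ / c₁) ^ p⁻¹ * exp (-(c₃ / (c₂ * p)) * (b - a)) * u a := by
  have hdecay : v b ≤ v a * exp (-(c₃ / c₂) * (b - a)) := by
    refine le_mul_exp_of_hasDerivAt_le_neg_mul hab fun t ht => ?_
    obtain ⟨v', hv', hle⟩ := hderiv t ht
    refine ⟨v', hv', hle.trans ?_⟩
    calc -(c₃ * u t ^ p) = -(c₃ / c₂) * (c₂ * u t ^ p) := by field_simp
      _ ≤ -(c₃ / c₂) * v t := mul_le_mul_of_nonpos_left (hup t ht) (neg_nonpos.2 (by positivity))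
  have hpow : u b ^ p ≤ (c₂ / c₁ * exp (-(c₃ / c₂) * (b - a))) * u a ^ p := by
    rw [← mul_le_mul_iff_right₀ hc₁]
    calc c₁ * u b ^ p ≤ v a * exp (-(c₃ / c₂) * (b - a)) := hlow.trans hdecay
      _ ≤ c₂ * u a ^ p * exp (-(c₃ / c₂) * (b - a)) := by gcongr; exact hup a (left_mem_Icc.2 hab)
      _ = _ := by field_simp
  calc u b ≤ (c₂ / c₁ * exp (-(c₃ / c₂) * (b - a))) ^ p⁻¹ * u a :=
        le_rpow_inv_mul_of_rpow_le_mul_rpow hub hua (by positivity) hp hpow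
    _ = _ := by
      rw [mul_rpow (by positivity) (exp_pos _).le, ← exp_mul]
      congr 3
      field_simp

theorem Continuous.lt_of_forall_Icc_le_imp_lt {f : ℝ → ℝ} {a ρ : ℝ} (hf : Continuous f)
    (ha : f a < ρ)
    (htrap : ∀ T, a ≤ T → (∀ s ∈ Icc a T, f s ≤ ρ) → f T < ρ) : ∀ s, a ≤ s → f s < ρ := by
  by_contra! ⟨s, has, hs⟩
  set A := Ici a ∩ f ⁻¹' Ici ρ
  have hA : IsClosed A := isClosed_Ici.inter (isClosed_Ici.preimage hf)
  have hbdd : BddBelow A := ⟨a, fun _ ht => ht.1⟩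
  obtain ⟨haT, hT⟩ : sInf A ∈ A := hA.csInf_mem ⟨s, has, hs⟩ hbdd
  have hbefore : ∀ t ∈ Ico a (sInf A), f t ≤ ρ := fun t ht =>
    (not_le.1 fun h => ht.2.not_ge (csInf_le hbdd ⟨ht.1, h⟩)).le
  have hlt : a < sInf A := haT.lt_of_ne fun h => (h ▸ hT).not_gt ha
  have hclosure : Icc a (sInf A) ⊆ f ⁻¹' Iic ρ := by
    rw [← closure_Ico hlt.ne]
    exact (isClosed_Iic.preimage hf).closure_subset_iff.2 hbefore
  exact (htrap _ haT hclosure).not_ge hT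

theorem exponential_stability_of_lyapunov_general
    {X : Type*} [MetricSpace X]
    (φ : ℝ → ℝ → X → X) (xs : X)
    (hflow : IsFlow φ)
    (r : ℝ) (hr : 0 < r)
    (c₁ c₂ c₃ p : ℝ) (hc₁ : 0 < c₁) (hc₂ : 0 < c₂) (hc₃ : 0 < c₃) (hp : 0 < p)
    (V : ℝ → X → ℝ)
    (hbound : ∀ t, 0 ≤ t → ∀ x ∈ Metric.ball xs r,
      c₁ * dist x xs ^ p ≤ V t x ∧ V t x ≤ c₂ * dist x xs ^ p)
    (hdecr : ∀ t₀, 0 ≤ t₀ → ∀ x₀ ∈ Metric.ball xs r, ∀ T, t₀ ≤ T →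
      (∀ τ ∈ Set.Icc t₀ T, φ τ t₀ x₀ ∈ Metric.ball xs r) →
      ∀ t ∈ Set.Icc t₀ T, ∃ v' : ℝ,
        HasDerivAt (fun s => V s (φ s t₀ x₀)) v' t ∧
        v' ≤ -(c₃ * dist (φ t t₀ x₀) xs ^ p)) :
    ∃ (K lam c : ℝ), 0 < K ∧ 0 < lam ∧ 0 < c ∧
      ∀ t₀ t x₀, 0 ≤ t₀ → t₀ ≤ t → dist x₀ xs < c →
        dist (φ t t₀ x₀) xs ≤ K * Real.exp (-lam * (t - t₀)) * dist x₀ xs := by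
  obtain ⟨hinit, -, hcont⟩ := hflow
  set K := max ((c₂ / c₁) ^ p⁻¹) 1
  set lam := c₃ / (c₂ * p)
  have hK : 0 < K := zero_lt_one.trans_le (le_max_right _ _)
  have hlam : 0 < lam := by positivity
  have hdecay : ∀ t₀ x₀ T, 0 ≤ t₀ → t₀ ≤ T → (∀ τ ∈ Icc t₀ T, φ τ t₀ x₀ ∈ Metric.ball xs r) →
      dist (φ T t₀ x₀) xs ≤ K * exp (-lam * (T - t₀)) * dist x₀ xs := by
    intro t₀ x₀ T ht₀ hT hball
    have hx₀ : x₀ ∈ Metric.ball xs r := hinit t₀ x₀ ▸ hball t₀ (left_mem_Icc.2 hT)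
    have hV (t) (ht : t ∈ Icc t₀ T) := hbound t (ht₀.trans ht.1) _ (hball t ht)
    calc dist (φ T t₀ x₀) xs
        ≤ (c₂ / c₁) ^ p⁻¹ * exp (-lam * (T - t₀)) * dist (φ t₀ t₀ x₀) xs :=
          le_mul_exp_of_lyapunov (u := fun s => dist (φ s t₀ x₀) xs) hT hc₁ hc₂ hc₃.le hp
            dist_nonneg dist_nonneg (hV T (right_mem_Icc.2 hT)).1 (fun t ht => (hV t ht).2)
            (hdecr t₀ ht₀ x₀ hx₀ T hT hball)
      _ ≤ K * exp (-lam * (T - t₀)) * dist x₀ xs := by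
          rw [hinit]; gcongr; exact le_max_left _ _
  refine ⟨K, lam, r / 2 / K, hK, hlam, by positivity, fun t₀ t x₀ ht₀ ht hx => ?_⟩
  have hstay : ∀ τ, t₀ ≤ τ → dist (φ τ t₀ x₀) xs < r / 2 := by
    refine ((hcont t₀ x₀).dist continuous_const).lt_of_forall_Icc_le_imp_lt ?_ fun T hT hle => ?_
    · rw [hinit]; exact hx.trans_le (div_le_self (by positivity) (le_max_right _ _))
    calc dist (φ T t₀ x₀) xs
        ≤ K * exp (-lam * (T - t₀)) * dist x₀ xs :=
          hdecay t₀ x₀ T ht₀ hT fun τ hτ => (hle τ hτ).trans_lt (half_lt_self hr)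
      _ ≤ K * dist x₀ xs := by
          gcongr
          exact mul_le_of_le_one_right hK.le (exp_le_one_iff.2
            (mul_nonpos_of_nonpos_of_nonneg (neg_nonpos.2 hlam.le) (sub_nonneg.2 hT)))
      _ < K * (r / 2 / K) := by gcongr
      _ = r / 2 := mul_div_cancel₀ _ hK.ne'
  exact hdecay t₀ x₀ t ht₀ ht fun τ hτ => (hstay τ hτ.1).trans (half_lt_self hr)

/-- Direct Lyapunov theorem for exponential stability on a metric
space. If `c₁·d(x,x⋆)^p ≤ V(t,x) ≤ c₂·d(x,x⋆)^p` on a ball `D` about `x⋆` and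
along every trajectory remaining in `D` the function `v(t) = V(t, φ(t; t₀, x₀))`
is differentiable with `v′(t) ≤ −c₃·d(φ(t; t₀, x₀), x⋆)^p`, then `x⋆` is
exponentially stable. -/
theorem exponential_stability_of_lyapunov
    {X : Type*} [MetricSpace X]
    (φ : ℝ → ℝ → X → X) (xs : X)
    (hflow : IsFlow φ) (heq : IsEquilibrium φ xs)
    (r : ℝ) (hr : 0 < r)
    (c₁ c₂ c₃ p : ℝ) (hc₁ : 0 < c₁) (hc₂ : 0 < c₂) (hc₃ : 0 < c₃) (hp : 0 < p)
    (V : ℝ → X → ℝ)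
    (hVcont : Continuous fun q : ℝ × X => V q.1 q.2)
    (hbound : ∀ t, 0 ≤ t → ∀ x ∈ Metric.ball xs r,
      c₁ * dist x xs ^ p ≤ V t x ∧ V t x ≤ c₂ * dist x xs ^ p)
    (hdecr : ∀ t₀, 0 ≤ t₀ → ∀ x₀ ∈ Metric.ball xs r, ∀ T, t₀ ≤ T →
      (∀ τ ∈ Set.Icc t₀ T, φ τ t₀ x₀ ∈ Metric.ball xs r) →
      ∀ t ∈ Set.Icc t₀ T, ∃ v' : ℝ,
        HasDerivAt (fun s => V s (φ s t₀ x₀)) v' t ∧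
        v' ≤ -(c₃ * dist (φ t t₀ x₀) xs ^ p)) :
    ∃ (K lam c : ℝ), 0 < K ∧ 0 < lam ∧ 0 < c ∧
      ∀ t₀ t x₀, 0 ≤ t₀ → t₀ ≤ t → dist x₀ xs < c →
        dist (φ t t₀ x₀) xs ≤ K * Real.exp (-lam * (t - t₀)) * dist x₀ xs :=
  exponential_stability_of_lyapunov_general φ xs hflow r hr c₁ c₂ c₃ p hc₁ hc₂ hc₃ hp V hbound hdecr
end

section
/- Let (X, d) be a metric space, let φ be a time-varying flow on X with equilibrium point x⋆, and let L, K, λ, δ > 0. Assume: (i) the lower Lipschitz estimate d(φ(τ; t, x), x⋆) ≥ e^{−L(τ−t)}·d(x, x⋆) for all τ ≥ t and all x ∈ X; (ii) the flow is uniformly globally exponentially stable: d(φ(τ; t, x), x⋆) ≤ K·e^{−λ(τ−t)}·d(x, x⋆) for all τ ≥ t ≥ 0 and all x ∈ X. Define V(t, x) = ∫ₜ^{t+δ} d(φ(τ; t, x), x⋆) dτ. Then for all t ≥ 0 and all x ∈ X, ((1 − e^{−Lδ})/L)·d(x, x⋆) ≤ V(t, x) ≤ (K(1 − e^{−λδ})/λ)·d(x,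 x⋆). -/
open Real Set MeasureTheory intervalIntegral

theorem integral_exp_neg_mul_sub (t δ : ℝ) {c : ℝ} (hc : c ≠ 0) :
    ∫ τ in t..t + δ, exp (-c * (τ - t)) = (1 - exp (-c * δ)) / c := by
  rw [integral_comp_sub_right (fun τ => exp (-c * τ)),
    integral_comp_mul_left exp (neg_ne_zero.2 hc), integral_exp]
  simp only [sub_self, add_sub_cancel_left, mul_zero, exp_zero, smul_eq_mul]
  field_simp
  ring

section ExpEnvelope

variable {f : ℝ → ℝ} {t δ c C : ℝ}

theorem intervalIntegrable_exp_neg_mul_sub_mul (t c C a b : ℝ) :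
    IntervalIntegrable (fun τ => exp (-c * (τ - t)) * C) volume a b :=
  (by fun_prop : Continuous fun τ => exp (-c * (τ - t)) * C).intervalIntegrable a b

theorem mul_le_integral_of_exp_neg_mul_sub_le (hf : IntervalIntegrable f volume t (t + δ))
    (hδ : 0 ≤ δ) (hc : c ≠ 0) (h : ∀ τ ∈ Icc t (t + δ), exp (-c * (τ - t)) * C ≤ f τ) :
    (1 - exp (-c * δ)) / c * C ≤ ∫ τ in t..t + δ, f τ := by
  rw [← integral_exp_neg_mul_sub t δ hc, ← intervalIntegral.integral_mul_const]
  exact integral_mono_on (by linarith) (intervalIntegrable_exp_neg_mul_sub_mul t c C _ _) hf h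

theorem integral_le_mul_of_le_exp_neg_mul_sub (hf : IntervalIntegrable f volume t (t + δ))
    (hδ : 0 ≤ δ) (hc : c ≠ 0) (h : ∀ τ ∈ Icc t (t + δ), f τ ≤ exp (-c * (τ - t)) * C) :
    ∫ τ in t..t + δ, f τ ≤ (1 - exp (-c * δ)) / c * C := by
  rw [← integral_exp_neg_mul_sub t δ hc, ← intervalIntegral.integral_mul_const]
  exact integral_mono_on (by linarith) hf (intervalIntegrable_exp_neg_mul_sub_mul t c C _ _) h

end ExpEnvelope

theorem converse_exp_bounds_general
    {X : Type*} [MetricSpace X]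
    (φ : ℝ → ℝ → X → X) (xs : X)
    (hflow : IsFlow φ)
    (L K lam δ : ℝ) (hL : 0 < L) (hlam : 0 < lam) (hδ : 0 < δ)
    (hlower : ∀ t τ x, t ≤ τ →
      Real.exp (-L * (τ - t)) * dist x xs ≤ dist (φ τ t x) xs)
    (hUGES : ∀ t τ x, 0 ≤ t → t ≤ τ →
      dist (φ τ t x) xs ≤ K * Real.exp (-lam * (τ - t)) * dist x xs) :
    ∀ t x, 0 ≤ t →
      ((1 - Real.exp (-L * δ)) / L) * dist x xs
          ≤ (∫ τ in t..(t + δ), dist (φ τ t x) xs) ∧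
      (∫ τ in t..(t + δ), dist (φ τ t x) xs)
          ≤ (K * (1 - Real.exp (-lam * δ)) / lam) * dist x xs := by
  intro t x ht
  have hint : IntervalIntegrable (fun τ => dist (φ τ t x) xs) volume t (t + δ) :=
    ((hflow.2.2 t x).dist continuous_const).intervalIntegrable _ _
  refine ⟨mul_le_integral_of_exp_neg_mul_sub_le hint hδ.le hL.ne'
    fun τ hτ => hlower t τ x hτ.1, ?_⟩
  calc (∫ τ in t..t + δ, dist (φ τ t x) xs)
      ≤ (1 - exp (-lam * δ)) / lam * (K * dist x xs) :=
        integral_le_mul_of_le_exp_neg_mul_sub hint hδ.le hlam.ne' fun τ hτ => by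
          linarith [hUGES t τ x ht hτ.1]
    _ = K * (1 - exp (-lam * δ)) / lam * dist x xs := by ring

/-- Item 1 of the converse Lyapunov theorem for UGES systems.
Under the lower Lipschitz estimate and uniform global exponential stability, the
candidate `V(t, x) = ∫ₜ^{t+δ} d(φ(τ; t, x), x⋆) dτ` is sandwiched between
linear functions of `d(x, x⋆)`. -/
theorem converse_exp_bounds
    {X : Type*} [MetricSpace X]
    (φ : ℝ → ℝ → X → X) (xs : X)
    (hflow : IsFlow φ) (heq : IsEquilibrium φ xs)
    (L K lam δ : ℝ) (hL : 0 < L) (hK : 0 < K) (hlam : 0 < lam) (hδ : 0 < δ)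
    (hlower : ∀ t τ x, t ≤ τ →
      Real.exp (-L * (τ - t)) * dist x xs ≤ dist (φ τ t x) xs)
    (hUGES : ∀ t τ x, 0 ≤ t → t ≤ τ →
      dist (φ τ t x) xs ≤ K * Real.exp (-lam * (τ - t)) * dist x xs) :
    ∀ t x, 0 ≤ t →
      ((1 - Real.exp (-L * δ)) / L) * dist x xs
          ≤ (∫ τ in t..(t + δ), dist (φ τ t x) xs) ∧
      (∫ τ in t..(t + δ), dist (φ τ t x) xs)
          ≤ (K * (1 - Real.exp (-lam * δ)) / lam) * dist x xs :=
  converse_exp_bounds_general φ xs hflow L K lam δ hL hlam hδ hlower hUGES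
end

section
/- (Massera's lemma) Let g : [0,∞) → ℝ be a positive, continuous, strictly decreasing function with g(t) → 0 as t → ∞, and let h : [0,∞) → ℝ be a positive, continuous, nondecreasing function. Then there exists a function G : [0,∞) → ℝ such that: (1) G is continuously differentiable on [0,∞), and both G and its derivative G′ are class 𝒦 functions; and (2) there exist positive constants k₁ and k₂ such that for every continuous function u : [0,∞) → ℝ satisfying 0 ≤ u(t) ≤ g(t) for all t ≥ 0, one has ∫₀^∞ G(u(t)) dt ≤ k₁ and ∫₀^∞ G′(u(t))·h(t) dt ≤ k₂. -/
/-!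
Write `γ(r) = sup {s ≥ 0 | r ≤ g s}` for the time after which `g` stays below `r`, and let
`ρ(r) = e^{-γ(r)} / (1 + h(γ(r)))` for `r > 0`, `ρ(r) = 0` otherwise. Then `ρ` is nondecreasing,
positive on `(0, ∞)`, and `ρ(g t) = e^{-t} / (1 + h t)` because `g` is strictly decreasing.
Take `G' r = ∫₀^r ρ` and `G r = ∫₀^r G'`. Monotonicity gives `G'(r) ≤ r ρ(r)` and `G(r) ≤ r G'(r)`,
so for `0 ≤ u ≤ g` both `G'(u t) h(t) ≤ g(0) e^{-t}` and `G(u t) ≤ g(0)² e^{-t}`.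
-/

open Set MeasureTheory Real Filter intervalIntegral

lemma isClassK_primitive {f : ℝ → ℝ} (hf : ∀ a b, IntervalIntegrable f volume a b)
    (hpos : ∀ r, 0 < r → 0 < f r) : IsClassK fun r => ∫ s in (0 : ℝ)..r, f s := by
  have hmono : StrictMonoOn (fun r => ∫ s in (0 : ℝ)..r, f s) (Ici 0) := by
    intro a ha b _ hab
    have hpos_ab : 0 < ∫ s in a..b, f s :=
      intervalIntegral_pos_of_pos_on (hf a b) (fun s hs => hpos s (ha.trans_lt hs.1)) hab
    show ∫ s in (0 : ℝ)..a, f s < ∫ s in (0 : ℝ)..b, f s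
    rw [← integral_add_adjacent_intervals (hf 0 a) (hf a b)]
    linarith
  refine ⟨(continuous_primitive hf 0).continuousOn, hmono, integral_same, fun r hr => ?_⟩
  rcases hr.eq_or_lt with rfl | hr
  · simp
  · simpa using (hmono self_mem_Ici hr.le hr).le

lemma IsClassK.pos_s7 {α : ℝ → ℝ} (hα : IsClassK α) {r : ℝ} (hr : 0 < r) : 0 < α r :=
  hα.2.2.1 ▸ hα.2.1 self_mem_Ici hr.le hr

lemma integral_le_mul_of_monotoneOn {f : ℝ → ℝ} {r : ℝ} (hr : 0 ≤ r)
    (hf : MonotoneOn f (Icc 0 r)) : ∫ s in (0 : ℝ)..r, f s ≤ r * f r := by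
  have hint : IntervalIntegrable f volume 0 r := (uIcc_of_le hr ▸ hf).intervalIntegrable
  simpa [mul_comm] using integral_mono_on hr hint intervalIntegrable_const
    fun s hs => hf hs (right_mem_Icc.2 hr) hs.2

lemma integrableOn_Ioi_and_setIntegral_le_of_norm_le_mul_exp_neg {F : ℝ → ℝ} {C : ℝ}
    (hF : AEStronglyMeasurable F (volume.restrict (Ioi 0)))
    (hle : ∀ t, 0 < t → ‖F t‖ ≤ C * exp (-t)) :
    IntegrableOn F (Ioi 0) ∧ ∫ t in Ioi 0, F t ≤ C := by
  have hdom : IntegrableOn (fun t => C * exp (-t)) (Ioi 0) :=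
    (integrableOn_exp_neg_Ioi 0).const_mul C
  have hint : IntegrableOn F (Ioi 0) :=
    hdom.mono' hF ((ae_restrict_mem measurableSet_Ioi).mono hle)
  refine ⟨hint, ?_⟩
  calc ∫ t in Ioi 0, F t ≤ ∫ t in Ioi 0, C * exp (-t) :=
        setIntegral_mono_on hint hdom measurableSet_Ioi
          fun t ht => (le_abs_self _).trans (hle t ht)
    _ = C := by rw [MeasureTheory.integral_const_mul, integral_exp_neg_Ioi_zero, mul_one]

namespace Massera

/-- For `r ≤ 0` the set is unbounded and `sSup` returns the junk value `0`; `density` never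
reads it there. -/
noncomputable def lastTime (g : ℝ → ℝ) (r : ℝ) : ℝ := sSup {s | 0 ≤ s ∧ r ≤ g s}

noncomputable def weight (h : ℝ → ℝ) (t : ℝ) : ℝ := exp (-t) / (1 + h t)

noncomputable def density (g h : ℝ → ℝ) (r : ℝ) : ℝ :=
  if 0 < r then weight h (lastTime g r) else 0

noncomputable def G' (g h : ℝ → ℝ) (r : ℝ) : ℝ := ∫ s in (0 : ℝ)..r, density g h s

noncomputable def G (g h : ℝ → ℝ) (r : ℝ) : ℝ := ∫ s in (0 : ℝ)..r, G' g h s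

variable {g h : ℝ → ℝ}

lemma lastTime_nonneg (r : ℝ) : 0 ≤ lastTime g r :=
  Real.sSup_nonneg fun _ hs => hs.1

lemma lastTime_apply (hgdec : StrictAntiOn g (Ici 0)) {t : ℝ} (ht : 0 ≤ t) :
    lastTime g (g t) = t := by
  have hset : {s | 0 ≤ s ∧ g t ≤ g s} = Icc 0 t := by
    ext s
    exact and_congr_right fun hs => hgdec.le_iff_ge ht hs
  rw [lastTime, hset, csSup_Icc ht]

lemma lastTime_antitoneOn (hglim : Tendsto g atTop (nhds 0)) :
    AntitoneOn (lastTime g) (Ioi 0) := by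
  intro a ha b _ hab
  rcases eq_empty_or_nonempty {s | 0 ≤ s ∧ b ≤ g s} with hempty | hne
  · rw [lastTime, hempty, Real.sSup_empty]
    exact lastTime_nonneg a
  · obtain ⟨T, hT⟩ := eventually_atTop.1 (hglim.eventually_lt_const ha)
    have hbdd : BddAbove {s | 0 ≤ s ∧ a ≤ g s} :=
      ⟨T, fun s hs => le_of_not_ge fun hTs => (hT s hTs).not_ge hs.2⟩
    exact csSup_le_csSup hbdd hne fun s hs => ⟨hs.1, hab.trans hs.2⟩

section weight

variable (hhpos : ∀ t, 0 ≤ t → 0 < h t)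
include hhpos

lemma weight_pos {t : ℝ} (ht : 0 ≤ t) : 0 < weight h t :=
  div_pos (exp_pos _) (by linarith [hhpos t ht])

lemma weight_le_exp_neg {t : ℝ} (ht : 0 ≤ t) : weight h t ≤ exp (-t) :=
  div_le_self (exp_pos _).le (by linarith [hhpos t ht])

lemma weight_mul_le {t : ℝ} (ht : 0 ≤ t) : weight h t * h t ≤ exp (-t) := by
  rw [weight, div_mul_eq_mul_div, div_le_iff₀ (by linarith [hhpos t ht])]
  exact mul_le_mul_of_nonneg_left (by linarith) (exp_pos _).le

lemma weight_antitoneOn (hhmono : MonotoneOn h (Ici 0)) : AntitoneOn (weight h) (Ici 0) := by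
  intro a ha b hb hab
  rw [weight, weight, div_le_div_iff₀ (by linarith [hhpos b hb]) (by linarith [hhpos a ha])]
  exact mul_le_mul (exp_le_exp.2 (by linarith)) (by linarith [hhmono ha hb hab])
    (by linarith [hhpos a ha]) (exp_pos _).le

end weight

lemma density_monotone (hglim : Tendsto g atTop (nhds 0)) (hhpos : ∀ t, 0 ≤ t → 0 < h t)
    (hhmono : MonotoneOn h (Ici 0)) : Monotone (density g h) := by
  intro a b hab
  rcases le_or_gt b 0 with hb | hb
  · simp only [density, if_neg (hab.trans hb).not_gt, if_neg hb.not_gt, le_refl]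
  rcases le_or_gt a 0 with ha | ha
  · simpa only [density, if_neg ha.not_gt, if_pos hb] using
      (weight_pos hhpos (lastTime_nonneg b)).le
  simp only [density, if_pos ha, if_pos hb]
  exact weight_antitoneOn hhpos hhmono (lastTime_nonneg b) (lastTime_nonneg a)
    (lastTime_antitoneOn hglim ha hb hab)

lemma density_pos (hhpos : ∀ t, 0 ≤ t → 0 < h t) {r : ℝ} (hr : 0 < r) : 0 < density g h r := by
  simpa only [density, if_pos hr] using weight_pos hhpos (lastTime_nonneg r)

lemma density_apply (hgpos : ∀ t, 0 ≤ t → 0 < g t) (hgdec : StrictAntiOn g (Ici 0)) {t : ℝ}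
    (ht : 0 ≤ t) : density g h (g t) = weight h t := by
  rw [density, if_pos (hgpos t ht), lastTime_apply hgdec ht]

section primitives

variable (hglim : Tendsto g atTop (nhds 0)) (hhpos : ∀ t, 0 ≤ t → 0 < h t)
  (hhmono : MonotoneOn h (Ici 0))
include hglim hhpos hhmono

lemma isClassK_G' : IsClassK (G' g h) :=
  isClassK_primitive (fun _ _ => (density_monotone hglim hhpos hhmono).intervalIntegrable)
    fun _ => density_pos hhpos

lemma continuous_G' : Continuous (G' g h) :=
  continuous_primitive (fun _ _ => (density_monotone hglim hhpos hhmono).intervalIntegrable) 0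

lemma isClassK_G : IsClassK (G g h) :=
  isClassK_primitive (fun _ _ => (continuous_G' hglim hhpos hhmono).intervalIntegrable _ _)
    fun _ => (isClassK_G' hglim hhpos hhmono).pos_s7

lemma hasDerivAt_G (r : ℝ) : HasDerivAt (G g h) (G' g h r) r :=
  ((continuous_G' hglim hhpos hhmono).integral_hasStrictDerivAt 0 r).hasDerivAt

lemma G'_le_mul_density {r : ℝ} (hr : 0 ≤ r) : G' g h r ≤ r * density g h r :=
  integral_le_mul_of_monotoneOn hr ((density_monotone hglim hhpos hhmono).monotoneOn _)

lemma G_le_mul_G' {r : ℝ} (hr : 0 ≤ r) : G g h r ≤ r * G' g h r :=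
  integral_le_mul_of_monotoneOn hr
    ((isClassK_G' hglim hhpos hhmono).2.1.monotoneOn.mono Icc_subset_Ici_self)

variable (hgpos : ∀ t, 0 ≤ t → 0 < g t) (hgdec : StrictAntiOn g (Ici 0))
include hgpos hgdec

lemma G'_le_mul_weight {t : ℝ} (ht : 0 ≤ t) : G' g h (g t) ≤ g t * weight h t := by
  rw [← density_apply hgpos hgdec ht]
  exact G'_le_mul_density hglim hhpos hhmono (hgpos t ht).le

lemma G'_mul_le_of_le_g {t v : ℝ} (ht : 0 ≤ t) (hv : 0 ≤ v) (hvg : v ≤ g t) :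
    G' g h v * h t ≤ g 0 * exp (-t) := by
  have hgt : g t ≤ g 0 := hgdec.antitoneOn self_mem_Ici ht ht
  calc G' g h v * h t ≤ g t * weight h t * h t := by
        gcongr
        · exact (hhpos t ht).le
        · exact ((isClassK_G' hglim hhpos hhmono).2.1.monotoneOn hv (hv.trans hvg) hvg).trans
            (G'_le_mul_weight hglim hhpos hhmono hgpos hgdec ht)
    _ = g t * (weight h t * h t) := mul_assoc _ _ _
    _ ≤ g 0 * exp (-t) := mul_le_mul hgt (weight_mul_le hhpos ht)
          (mul_nonneg (weight_pos hhpos ht).le (hhpos t ht).le) (hgpos 0 le_rfl).le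

lemma G_le_of_le_g {t v : ℝ} (ht : 0 ≤ t) (hv : 0 ≤ v) (hvg : v ≤ g t) :
    G g h v ≤ g 0 ^ 2 * exp (-t) := by
  have hgt0 : 0 ≤ g t := (hgpos t ht).le
  have hgt : g t ≤ g 0 := hgdec.antitoneOn self_mem_Ici ht ht
  calc G g h v ≤ G g h (g t) :=
        (isClassK_G hglim hhpos hhmono).2.1.monotoneOn hv hgt0 hvg
    _ ≤ g t * G' g h (g t) := G_le_mul_G' hglim hhpos hhmono hgt0
    _ ≤ g t * (g t * weight h t) := by
        gcongr; exact G'_le_mul_weight hglim hhpos hhmono hgpos hgdec ht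
    _ ≤ g 0 * (g 0 * exp (-t)) := by
        have := (weight_pos hhpos ht).le
        have := (hgpos 0 le_rfl).le
        gcongr; exact weight_le_exp_neg hhpos ht
    _ = g 0 ^ 2 * exp (-t) := by ring

end primitives

end Massera

theorem massera_lemma_general
    (g h : ℝ → ℝ)
    (hgpos : ∀ t, 0 ≤ t → 0 < g t)
    (hgdec : StrictAntiOn g (Set.Ici 0))
    (hglim : Filter.Tendsto g Filter.atTop (nhds 0))
    (hhpos : ∀ t, 0 ≤ t → 0 < h t)
    (hhcont : ContinuousOn h (Set.Ici 0))
    (hhmono : MonotoneOn h (Set.Ici 0)) :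
    ∃ G G' : ℝ → ℝ,
      (∀ r, 0 ≤ r → HasDerivWithinAt G (G' r) (Set.Ici 0) r) ∧
      ContinuousOn G' (Set.Ici 0) ∧
      IsClassK G ∧ IsClassK G' ∧
      ∃ k₁ k₂ : ℝ, 0 < k₁ ∧ 0 < k₂ ∧
        ∀ u : ℝ → ℝ, ContinuousOn u (Set.Ici 0) →
          (∀ t, 0 ≤ t → 0 ≤ u t ∧ u t ≤ g t) →
          (MeasureTheory.IntegrableOn (fun t => G (u t)) (Set.Ioi 0) ∧
            (∫ t in Set.Ioi (0 : ℝ), G (u t)) ≤ k₁) ∧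
          (MeasureTheory.IntegrableOn (fun t => G' (u t) * h t) (Set.Ioi 0) ∧
            (∫ t in Set.Ioi (0 : ℝ), G' (u t) * h t) ≤ k₂) := by
  have hG'K := Massera.isClassK_G' hglim hhpos hhmono
  have hGK := Massera.isClassK_G hglim hhpos hhmono
  refine ⟨Massera.G g h, Massera.G' g h,
    fun r _ => (Massera.hasDerivAt_G hglim hhpos hhmono r).hasDerivWithinAt,
    (Massera.continuous_G' hglim hhpos hhmono).continuousOn, hGK, hG'K,
    g 0 ^ 2, g 0, pow_pos (hgpos 0 le_rfl) 2, hgpos 0 le_rfl, fun u hu hug => ⟨?_, ?_⟩⟩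
  · refine integrableOn_Ioi_and_setIntegral_le_of_norm_le_mul_exp_neg
      (((hGK.1.comp hu fun t ht => (hug t ht).1).mono Ioi_subset_Ici_self).aestronglyMeasurable
        measurableSet_Ioi) fun t ht => ?_
    obtain ⟨hu0, hug⟩ := hug t ht.le
    rw [Real.norm_of_nonneg (hGK.2.2.2 _ hu0)]
    exact Massera.G_le_of_le_g hglim hhpos hhmono hgpos hgdec ht.le hu0 hug
  · refine integrableOn_Ioi_and_setIntegral_le_of_norm_le_mul_exp_neg
      ((((hG'K.1.comp hu fun t ht => (hug t ht).1).mul hhcont).mono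
        Ioi_subset_Ici_self).aestronglyMeasurable measurableSet_Ioi) fun t ht => ?_
    obtain ⟨hu0, hug⟩ := hug t ht.le
    rw [Real.norm_of_nonneg (mul_nonneg (hG'K.2.2.2 _ hu0) (hhpos t ht.le).le)]
    exact Massera.G'_mul_le_of_le_g hglim hhpos hhmono hgpos hgdec ht.le hu0 hug

/-- Massera's lemma. Given a positive, continuous, strictly
decreasing `g` with `g(t) → 0` at `∞` and a positive, continuous, nondecreasing
`h`, there is a continuously differentiable `G` with `G` and `G′` class 𝒦 and
constants `k₁, k₂ > 0` such that for every continuous `u` with `0 ≤ u ≤ g`,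
`∫₀^∞ G(u(t)) dt ≤ k₁` and `∫₀^∞ G′(u(t))·h(t) dt ≤ k₂`. -/
theorem massera_lemma
    (g h : ℝ → ℝ)
    (hgpos : ∀ t, 0 ≤ t → 0 < g t)
    (hgcont : ContinuousOn g (Set.Ici 0))
    (hgdec : StrictAntiOn g (Set.Ici 0))
    (hglim : Filter.Tendsto g Filter.atTop (nhds 0))
    (hhpos : ∀ t, 0 ≤ t → 0 < h t)
    (hhcont : ContinuousOn h (Set.Ici 0))
    (hhmono : MonotoneOn h (Set.Ici 0)) :
    ∃ G G' : ℝ → ℝ,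
      (∀ r, 0 ≤ r → HasDerivWithinAt G (G' r) (Set.Ici 0) r) ∧
      ContinuousOn G' (Set.Ici 0) ∧
      IsClassK G ∧ IsClassK G' ∧
      ∃ k₁ k₂ : ℝ, 0 < k₁ ∧ 0 < k₂ ∧
        ∀ u : ℝ → ℝ, ContinuousOn u (Set.Ici 0) →
          (∀ t, 0 ≤ t → 0 ≤ u t ∧ u t ≤ g t) →
          (MeasureTheory.IntegrableOn (fun t => G (u t)) (Set.Ioi 0) ∧
            (∫ t in Set.Ioi (0 : ℝ), G (u t)) ≤ k₁) ∧
          (MeasureTheory.IntegrableOn (fun t => G' (u t) * h t) (Set.Ioi 0) ∧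
            (∫ t in Set.Ioi (0 : ℝ), G' (u t) * h t) ≤ k₂) :=
  massera_lemma_general g h hgpos hgdec hglim hhpos hhcont hhmono
end
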